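/- Fix real numbers M and a with 0 < |a| < M, set Δ(r) = r² − 2Mr + a², r₊ = M + √(M² − a²), r₋ = M − √(M² − a²), μ(r) = Δ(r)/(r² + a²), and let ρ : ℝ → (r₋, r₊) be the inverse of the map r ↦ 2∫_M^r (s² + a²)/Δ(s) ds. Let r_b ∈ (r₋, r₊). Then there exists a constant C > 0, depending only on M, a and r_b, such that for every u ∈ ℝ and every ū ≥ 1 with ρ(u + ū) ≤ r_b: 0 ≤ ∫_{ū}^{∞} (1/(r₋² + a²) − 1/(ρ(u + t)² + a²)) · t^{−4} dt ≤ C·(ρ(u + ū) − r₋)·ū^{−4}. -/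

import Mathlib

open MeasureTheory

noncomputable def KerrDelta (M a r : ℝ) : ℝ := r ^ 2 - 2 * M * r + a ^ 2

noncomputable def rPlus (M a : ℝ) : ℝ := M + Real.sqrt (M ^ 2 - a ^ 2)

noncomputable def rMinus (M a : ℝ) : ℝ := M - Real.sqrt (M ^ 2 - a ^ 2)

noncomputable def kerrMu (M a r : ℝ) : ℝ := KerrDelta M a r / (r ^ 2 + a ^ 2)

/-- The tortoise coordinate `r*`, normalized by `r*(M) = 0`. -/
noncomputable def rStar (M a r : ℝ) : ℝ := ∫ s in M..r, (s ^ 2 + a ^ 2) / KerrDelta M a s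

/-!
On `(r₋, r_b]` one has `-Δ(r) ≥ (r - r₋)(r₊ - r_b)` and `r² + a² ≤ r₊² + a²`, so with
`κ = (r₊ - r_b) / (2 (r₊² + a²))` the function `r ↦ 2κ r*(r) + log (r - r₋)` is nondecreasing.
Since `2 r*(ρ x) = x`, this says `ρ(x) - r₋ ≤ (ρ(x₀) - r₋) e^{-κ (x - x₀)}` once `ρ(x₀) ≤ r_b`.
The first factor of the integrand is at most `2r₊ (ρ - r₋) / (r₋² + a²)²` and `t⁻⁴ ≤ ū⁻⁴`, so the
tail integral is bounded by that of an exponential, which contributes the factor `1 / κ`.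
-/

open Real Set

lemma antitone_of_strictAntiOn_of_two_mul_comp {g ρ : ℝ → ℝ} {s : Set ℝ}
    (hg : StrictAntiOn g s) (hmem : ∀ x, ρ x ∈ s) (hinv : ∀ x, 2 * g (ρ x) = x) :
    Antitone ρ := by
  intro x y hxy
  by_contra! hlt
  have := hg (hmem x) (hmem y) hlt
  linarith [hinv x, hinv y]

lemma one_div_sub_one_div_le_mul_sub {m r R b : ℝ} (hm : 0 ≤ m) (hb : 0 < m ^ 2 + b)
    (hmr : m ≤ r) (hrR : r ≤ R) :
    1 / (m ^ 2 + b) - 1 / (r ^ 2 + b) ≤ 2 * R / (m ^ 2 + b) ^ 2 * (r - m) := by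
  have hr : 0 < r ^ 2 + b := by nlinarith
  calc 1 / (m ^ 2 + b) - 1 / (r ^ 2 + b) = (r - m) * (r + m) / ((m ^ 2 + b) * (r ^ 2 + b)) := by
        field_simp; ring
    _ ≤ (r - m) * (2 * R) / ((m ^ 2 + b) * (m ^ 2 + b)) :=
        div_le_div₀ (by nlinarith) (by nlinarith) (by positivity)
          (mul_le_mul_of_nonneg_left (by nlinarith) hb.le)
    _ = 2 * R / (m ^ 2 + b) ^ 2 * (r - m) := by ring

lemma setIntegral_Ici_le_div_of_le_mul_exp {f : ℝ → ℝ} {B κ t₀ : ℝ} (hκ : 0 < κ)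
    (hf : AEStronglyMeasurable f (volume.restrict (Ici t₀))) (hf0 : ∀ t ∈ Ici t₀, 0 ≤ f t)
    (hfle : ∀ t ∈ Ici t₀, f t ≤ B * exp (-κ * (t - t₀))) :
    ∫ t in Ici t₀, f t ≤ B / κ := by
  have hexp : ∀ t, B * exp (-κ * (t - t₀)) = B * exp (κ * t₀) * exp (-κ * t) := fun t => by
    rw [mul_assoc, ← exp_add]; ring_nf
  have hint : IntegrableOn (fun t => B * exp (-κ * (t - t₀))) (Ici t₀) := by
    simp_rw [hexp]
    exact Iff.mpr integrableOn_Ici_iff_integrableOn_Ioi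
      ((exp_neg_integrableOn_Ioi t₀ hκ).const_mul _)
  have hfint : IntegrableOn f (Ici t₀) := hint.mono' hf <| by
    filter_upwards [ae_restrict_mem measurableSet_Ici] with t ht
    rw [Real.norm_eq_abs, abs_of_nonneg (hf0 t ht)]
    exact hfle t ht
  calc ∫ t in Ici t₀, f t ≤ ∫ t in Ici t₀, B * exp (-κ * (t - t₀)) :=
        setIntegral_mono_on hfint hint measurableSet_Ici hfle
    _ = B / κ := by
        simp_rw [hexp]
        rw [integral_Ici_eq_integral_Ioi, integral_const_mul,
          integral_exp_mul_Ioi (neg_neg_of_pos hκ), neg_div_neg_eq, mul_assoc,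
          mul_div_assoc', ← exp_add, neg_mul, add_neg_cancel, exp_zero, mul_one_div]

section Kerr

variable {M a : ℝ}

lemma rMinus_lt_M (h : a ^ 2 < M ^ 2) : rMinus M a < M := by
  have := Real.sqrt_pos.mpr (sub_pos.mpr h)
  unfold rMinus; linarith

lemma M_lt_rPlus (h : a ^ 2 < M ^ 2) : M < rPlus M a := by
  have := Real.sqrt_pos.mpr (sub_pos.mpr h)
  unfold rPlus; linarith

lemma rMinus_nonneg (hM : 0 ≤ M) : 0 ≤ rMinus M a := by
  have : Real.sqrt (M ^ 2 - a ^ 2) ≤ M :=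
    Real.sqrt_le_iff.mpr ⟨hM, by nlinarith [sq_nonneg a]⟩
  unfold rMinus; linarith

lemma kerrDelta_eq_mul (h : a ^ 2 ≤ M ^ 2) (r : ℝ) :
    KerrDelta M a r = (r - rMinus M a) * (r - rPlus M a) := by
  unfold KerrDelta rMinus rPlus
  linear_combination Real.sq_sqrt (sub_nonneg.mpr h)

lemma kerrDelta_neg (h : a ^ 2 ≤ M ^ 2) {r : ℝ} (hr : r ∈ Ioo (rMinus M a) (rPlus M a)) :
    KerrDelta M a r < 0 := by
  rw [kerrDelta_eq_mul h]
  exact mul_neg_of_pos_of_neg (sub_pos.mpr hr.1) (sub_neg.mpr hr.2)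

lemma continuousOn_rStar_integrand (h : a ^ 2 ≤ M ^ 2) :
    ContinuousOn (fun s => (s ^ 2 + a ^ 2) / KerrDelta M a s) (Ioo (rMinus M a) (rPlus M a)) :=
  ContinuousOn.div (by fun_prop) (by unfold KerrDelta; fun_prop)
    fun _ hs => (kerrDelta_neg h hs).ne

lemma hasDerivAt_rStar (h : a ^ 2 < M ^ 2) {r : ℝ} (hr : r ∈ Ioo (rMinus M a) (rPlus M a)) :
    HasDerivAt (rStar M a) ((r ^ 2 + a ^ 2) / KerrDelta M a r) r := by
  have hcont := continuousOn_rStar_integrand h.le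
  have hM : M ∈ Ioo (rMinus M a) (rPlus M a) := ⟨rMinus_lt_M h, M_lt_rPlus h⟩
  have hsub : uIcc M r ⊆ Ioo (rMinus M a) (rPlus M a) := ordConnected_Ioo.uIcc_subset hM hr
  exact intervalIntegral.integral_hasDerivAt_right
    ((hcont.mono hsub).intervalIntegrable)
    (hcont.stronglyMeasurableAtFilter isOpen_Ioo r hr)
    (hcont.continuousAt (isOpen_Ioo.mem_nhds hr))

lemma strictAntiOn_rStar (ha : a ≠ 0) (h : a ^ 2 < M ^ 2) :
    StrictAntiOn (rStar M a) (Ioo (rMinus M a) (rPlus M a)) := by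
  refine strictAntiOn_of_hasDerivWithinAt_neg (convex_Ioo _ _)
    (fun r hr => (hasDerivAt_rStar h hr).continuousAt.continuousWithinAt)
    (fun r hr => (hasDerivAt_rStar h (interior_subset hr)).hasDerivWithinAt) fun r hr => ?_
  rw [interior_Ioo] at hr
  exact div_neg_of_pos_of_neg (by positivity) (kerrDelta_neg h.le hr)

noncomputable def horizonDecayRate (M a rb : ℝ) : ℝ :=
  (rPlus M a - rb) / (2 * (rPlus M a ^ 2 + a ^ 2))

lemma horizonDecayRate_pos (ha : a ≠ 0) {rb : ℝ} (hrb : rb < rPlus M a) :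
    0 < horizonDecayRate M a rb :=
  div_pos (sub_pos.mpr hrb) (by positivity)

lemma two_mul_horizonDecayRate_mul_le (ha : a ≠ 0) {r rb : ℝ} (hr : 0 ≤ r) (hrb : r ≤ rb)
    (hrbp : rb < rPlus M a) :
    2 * horizonDecayRate M a rb * (r ^ 2 + a ^ 2) ≤ rPlus M a - r := by
  have hq : r ^ 2 + a ^ 2 ≤ rPlus M a ^ 2 + a ^ 2 := by nlinarith
  calc 2 * horizonDecayRate M a rb * (r ^ 2 + a ^ 2)
      = (rPlus M a - rb) * ((r ^ 2 + a ^ 2) / (rPlus M a ^ 2 + a ^ 2)) := by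
        unfold horizonDecayRate; field_simp
    _ ≤ (rPlus M a - rb) * 1 :=
        mul_le_mul_of_nonneg_left ((div_le_one (by positivity)).mpr hq) (by linarith)
    _ ≤ rPlus M a - r := by linarith

lemma monotoneOn_horizonDecayRate_mul_rStar_add_log (ha : a ≠ 0) (haM : |a| < M) {rb : ℝ}
    (hrb : rb < rPlus M a) :
    MonotoneOn (fun r => horizonDecayRate M a rb * (2 * rStar M a r) + log (r - rMinus M a))
      (Ioc (rMinus M a) rb) := by
  have h : a ^ 2 < M ^ 2 := sq_lt_sq' (abs_lt.mp haM).1 (abs_lt.mp haM).2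
  set κ := horizonDecayRate M a rb
  have hderiv : ∀ r ∈ Ioc (rMinus M a) rb, HasDerivAt
      (fun r => κ * (2 * rStar M a r) + log (r - rMinus M a))
      (κ * (2 * ((r ^ 2 + a ^ 2) / KerrDelta M a r)) + 1 / (r - rMinus M a)) r := fun r hr =>
    (((hasDerivAt_rStar h ⟨hr.1, hr.2.trans_lt hrb⟩).const_mul 2).const_mul κ).add
      (((hasDerivAt_id r).sub_const _).log (sub_pos.mpr hr.1).ne')
  refine monotoneOn_of_hasDerivWithinAt_nonneg (convex_Ioc _ _)
    (fun r hr => (hderiv r hr).continuousAt.continuousWithinAt)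
    (fun r hr => (hderiv r (interior_subset hr)).hasDerivWithinAt) fun r hr => ?_
  rw [interior_Ioc] at hr
  have hrm : 0 < r - rMinus M a := sub_pos.mpr hr.1
  have hrp : 0 < rPlus M a - r := by linarith [hr.2]
  have hle := two_mul_horizonDecayRate_mul_le ha
    ((rMinus_nonneg ((abs_nonneg a).trans haM.le)).trans hr.1.le) hr.2.le hrb
  rw [kerrDelta_eq_mul h.le]
  have hrp' : r - rPlus M a ≠ 0 := by linarith
  have hderiv_eq : κ * (2 * ((r ^ 2 + a ^ 2) / ((r - rMinus M a) * (r - rPlus M a))))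
      + 1 / (r - rMinus M a)
      = (rPlus M a - r - 2 * κ * (r ^ 2 + a ^ 2)) / ((r - rMinus M a) * (rPlus M a - r)) := by
    field_simp
    ring
  rw [hderiv_eq]
  exact div_nonneg (by linarith) (by positivity)

lemma sub_rMinus_le_mul_exp (ha : a ≠ 0) (haM : |a| < M) {ρ : ℝ → ℝ}
    (hanti : Antitone ρ) (hρmem : ∀ x, ρ x ∈ Ioo (rMinus M a) (rPlus M a))
    (hρinv : ∀ x, 2 * rStar M a (ρ x) = x) {rb : ℝ} (hrb : rb < rPlus M a) {x₀ x : ℝ}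
    (hx : x₀ ≤ x) (hx₀ : ρ x₀ ≤ rb) :
    ρ x - rMinus M a ≤ (ρ x₀ - rMinus M a) * exp (-horizonDecayRate M a rb * (x - x₀)) := by
  have hmono := monotoneOn_horizonDecayRate_mul_rStar_add_log ha haM hrb
    ⟨(hρmem x).1, (hanti hx).trans hx₀⟩ ⟨(hρmem x₀).1, hx₀⟩ (hanti hx)
  simp only [hρinv] at hmono
  have hpos : ∀ y, 0 < ρ y - rMinus M a := fun y => sub_pos.mpr (hρmem y).1
  calc ρ x - rMinus M a = exp (log (ρ x - rMinus M a)) := (exp_log (hpos x)).symm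
    _ ≤ exp (log (ρ x₀ - rMinus M a) + -horizonDecayRate M a rb * (x - x₀)) :=
        exp_le_exp.mpr (by linarith)
    _ = (ρ x₀ - rMinus M a) * exp (-horizonDecayRate M a rb * (x - x₀)) := by
        rw [exp_add, exp_log (hpos x₀)]

lemma integrand_le_mul_exp (ha : a ≠ 0) (haM : |a| < M) {ρ : ℝ → ℝ} (hanti : Antitone ρ)
    (hρmem : ∀ x, ρ x ∈ Ioo (rMinus M a) (rPlus M a)) (hρinv : ∀ x, 2 * rStar M a (ρ x) = x)
    {rb : ℝ} (hrb : rb < rPlus M a) {u ub t : ℝ} (hub : 0 < ub) (ht : ub ≤ t)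
    (hρb : ρ (u + ub) ≤ rb) :
    (1 / (rMinus M a ^ 2 + a ^ 2) - 1 / (ρ (u + t) ^ 2 + a ^ 2)) * t ^ (-(4:ℝ))
      ≤ 2 * rPlus M a / (rMinus M a ^ 2 + a ^ 2) ^ 2 * (ρ (u + ub) - rMinus M a)
        * ub ^ (-(4:ℝ)) * exp (-horizonDecayRate M a rb * (t - ub)) := by
  set K := 2 * rPlus M a / (rMinus M a ^ 2 + a ^ 2) ^ 2
  have hrm : 0 ≤ rMinus M a := rMinus_nonneg ((abs_nonneg a).trans haM.le)
  have hK : 0 < K := div_pos (by linarith [(hρmem u).1, (hρmem u).2]) (by positivity)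
  have hdecay := sub_rMinus_le_mul_exp ha haM hanti hρmem hρinv hrb
    ((add_le_add_iff_left u).mpr ht) hρb
  rw [add_sub_add_left_eq_sub] at hdecay
  calc (1 / (rMinus M a ^ 2 + a ^ 2) - 1 / (ρ (u + t) ^ 2 + a ^ 2)) * t ^ (-(4:ℝ))
      ≤ K * (ρ (u + t) - rMinus M a) * ub ^ (-(4:ℝ)) :=
        mul_le_mul (one_div_sub_one_div_le_mul_sub hrm (by positivity) (hρmem _).1.le
          (hρmem _).2.le) (rpow_le_rpow_of_nonpos hub ht (by norm_num))
          (rpow_nonneg (hub.trans_le ht).le _) (mul_nonneg hK.le (sub_nonneg.mpr (hρmem _).1.le))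
    _ ≤ K * ((ρ (u + ub) - rMinus M a) * exp (-horizonDecayRate M a rb * (t - ub)))
        * ub ^ (-(4:ℝ)) := by gcongr
    _ = _ := by ring

end Kerr

/-- Tail-integral estimate converting the asymptotics of `∂_ū ψ` into the asymptotics
of `ψ` at the Cauchy horizon: with `ρ` the inverse of `r ↦ 2r*(r)` and `r_b ∈ (r₋, r₊)`,
there is `C > 0` such that for `ū ≥ 1` with `ρ(u + ū) ≤ r_b` the tail integral
`∫_ū^∞ (1/(r₋²+a²) − 1/(ρ(u+t)²+a²)) t^{−4} dt` lies in `[0, C (ρ(u+ū) − r₋) ū^{−4}]`. -/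
theorem tail_integral_estimate (M a : ℝ) (ha : 0 < |a|) (haM : |a| < M)
    (ρ : ℝ → ℝ) (hρmem : ∀ x : ℝ, ρ x ∈ Set.Ioo (rMinus M a) (rPlus M a))
    (hρinv : ∀ x : ℝ, 2 * rStar M a (ρ x) = x)
    (rb : ℝ) (hrb : rb ∈ Set.Ioo (rMinus M a) (rPlus M a)) :
    ∃ C : ℝ, 0 < C ∧
      ∀ u ub : ℝ, 1 ≤ ub → ρ (u + ub) ≤ rb →
        0 ≤ (∫ t in Set.Ici ub,
              (1 / (rMinus M a ^ 2 + a ^ 2) - 1 / (ρ (u + t) ^ 2 + a ^ 2))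
                * t ^ (-(4:ℝ))) ∧
        (∫ t in Set.Ici ub,
              (1 / (rMinus M a ^ 2 + a ^ 2) - 1 / (ρ (u + t) ^ 2 + a ^ 2))
                * t ^ (-(4:ℝ)))
          ≤ C * (ρ (u + ub) - rMinus M a) * ub ^ (-(4:ℝ)) := by
  have ha₀ : a ≠ 0 := abs_pos.mp ha
  have hrm : 0 ≤ rMinus M a := rMinus_nonneg (ha.trans haM).le
  have hanti : Antitone ρ := antitone_of_strictAntiOn_of_two_mul_comp
    (strictAntiOn_rStar ha₀ (sq_lt_sq' (abs_lt.mp haM).1 (abs_lt.mp haM).2)) hρmem hρinv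
  set κ := horizonDecayRate M a rb
  set K := 2 * rPlus M a / (rMinus M a ^ 2 + a ^ 2) ^ 2
  have hκ : 0 < κ := horizonDecayRate_pos ha₀ hrb.2
  have hK : 0 < K := div_pos (by linarith [hrb.1, hrb.2]) (by positivity)
  refine ⟨K / κ, div_pos hK hκ, fun u ub hub hρb => ?_⟩
  have hub₀ : 0 < ub := one_pos.trans_le hub
  set F := fun t => (1 / (rMinus M a ^ 2 + a ^ 2) - 1 / (ρ (u + t) ^ 2 + a ^ 2)) * t ^ (-(4:ℝ))
  have hF₀ : ∀ t ∈ Ici ub, 0 ≤ F t := fun t ht =>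
    mul_nonneg (sub_nonneg.mpr (one_div_le_one_div_of_le (by positivity)
      (by nlinarith [(hρmem (u + t)).1])))
      (rpow_nonneg (hub₀.trans_le ht).le _)
  have hF_meas : Measurable F := by
    have := hanti.measurable
    fun_prop
  refine ⟨setIntegral_nonneg measurableSet_Ici hF₀, ?_⟩
  calc ∫ t in Ici ub, F t ≤ K * (ρ (u + ub) - rMinus M a) * ub ^ (-(4:ℝ)) / κ :=
        setIntegral_Ici_le_div_of_le_mul_exp hκ hF_meas.aestronglyMeasurable hF₀ fun t ht =>
          integrand_le_mul_exp ha₀ haM hanti hρmem hρinv hrb.2 hub₀ ht hρb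
    _ = K / κ * (ρ (u + ub) - rMinus M a) * ub ^ (-(4:ℝ)) := by ring
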